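/- arXiv:1812.05483 — 2 statements merged into one kernel-verified Lean document; each statement's English description precedes it below -/
import Mathlib

section
/- Suppose b, c are real numbers with b² + c² > 0, satisfying |e^{-2b} - 1| ≤ (1/4)·max(|b|, |c|^{1/2}) and |e^{-3b}·c| ≤ (1/4)·max(|b|², |c|). Assume also |b| ≤ 1/2 and |c| ≤ 1/2. Then this leads to a contradiction; that is, no such b, c exist. -/
/-- The coefficient contradiction: no reals `b, c` with `b² + c² > 0`,
`|b| ≤ 1/2`, `|c| ≤ 1/2` satisfy both
`|e^{-2b} - 1| ≤ (1/4) max(|b|, |c|^{1/2})` and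
`|e^{-3b} c| ≤ (1/4) max(b², |c|)`. -/
theorem stmt3 (b c : ℝ) (hbc : 0 < b ^ 2 + c ^ 2)
    (hb : |b| ≤ 1 / 2) (hc : |c| ≤ 1 / 2)
    (h1 : |Real.exp (-2 * b) - 1| ≤ (1 / 4) * max |b| (Real.sqrt |c|))
    (h2 : |Real.exp (-3 * b) * c| ≤ (1 / 4) * max (b ^ 2) |c|) :
    False := by
  -- Step 1: |b| ≤ |exp(-2b) - 1|
  have step1 : |b| ≤ |Real.exp (-2 * b) - 1| := by
    rcases le_or_gt b 0 with h | h
    · have h1' : -2 * b + 1 ≤ Real.exp (-2 * b) := Real.add_one_le_exp _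
      rw [abs_of_nonpos h, abs_of_nonneg (by linarith)]
      linarith
    · have h2' : 2 * b + 1 ≤ Real.exp (2 * b) := Real.add_one_le_exp _
      have hmul : Real.exp (-2 * b) * Real.exp (2 * b) = 1 := by
        rw [← Real.exp_add]; norm_num
      have hEpos : (0:ℝ) < Real.exp (-2 * b) := Real.exp_pos _
      have hle : Real.exp (-2 * b) ≤ 1 - b := by
        have hb' : b ≤ 1/2 := (abs_le.mp hb).2
        nlinarith [mul_le_mul_of_nonneg_left h2' (le_of_lt hEpos),
          mul_nonneg h.le (by linarith : (0:ℝ) ≤ 1 - 2 * b)]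
      rw [abs_of_pos h, abs_sub_comm, abs_of_nonneg (by linarith)]
      linarith
  set s := Real.sqrt |c| with hs
  have hs0 : 0 ≤ s := Real.sqrt_nonneg _
  have hs2 : s ^ 2 = |c| := Real.sq_sqrt (abs_nonneg c)
  -- Step 2: |b| ≤ (1/4) * s
  have step2 : |b| ≤ (1/4) * s := by
    have hh := le_trans step1 h1
    rcases le_total |b| s with h | h
    · rwa [max_eq_right h] at hh
    · rw [max_eq_left h] at hh
      have : |b| ≤ 0 := by linarith
      linarith
  -- c ≠ 0
  have hcpos : 0 < |c| := by
    rcases eq_or_ne c 0 with rfl | hne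
    · have : s = 0 := by simp [hs]
      have hb0 : |b| ≤ 0 := by rw [this] at step2; linarith
      have : b = 0 := abs_eq_zero.mp (le_antisymm hb0 (abs_nonneg b))
      subst this; norm_num at hbc
    · exact abs_pos.mpr hne
  -- s ≤ 3/4, so |b| ≤ 3/16
  have hs34 : s ≤ 3/4 := by nlinarith
  have hb316 : |b| ≤ 3/16 := by linarith
  -- exp(-3b) ≥ 7/16
  have hE : (7:ℝ)/16 ≤ Real.exp (-3 * b) := by
    have := Real.add_one_le_exp (-3 * b)
    have hble : b ≤ |b| := le_abs_self b
    linarith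
  -- b^2 ≤ |c|/16
  have hb2 : b ^ 2 ≤ |c| / 16 := by
    nlinarith [sq_abs b, mul_le_mul step2 step2 (abs_nonneg b) (by positivity)]
  have hmax : max (b ^ 2) |c| = |c| := max_eq_right (by linarith)
  rw [hmax] at h2
  have habs : |Real.exp (-3 * b) * c| = Real.exp (-3 * b) * |c| := by
    rw [abs_mul, abs_of_pos (Real.exp_pos _)]
  rw [habs] at h2
  nlinarith
end

section
/- Let σ: ℝ → ℝ be continuous with σ(0) = 0, and suppose |σ(s/2) - s/2| ≤ (1/2 - γ)·|σ(s) - s| for all s in an interval [0, B], where γ ∈ (0, 1/2). Let a ∈ ℝ and define r(t) = |e^a·σ(t) - t| and A(t) = σ(t) - t. If r(B) ≤ 1 and |A(B)| > 4γ^{-1}·e^{-a}, then r(B/2) > 1; consequently there exists N ∈ [0, B] with r(N) = 1. -/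
/-!
Write `E = e^a` and `A = σ - id`. Both `E A(B) = r(B) ± (E - 1) B` and
`(E - 1) B / 2 = ±r(B/2) ± E A(B/2)` are the triangle inequality, and the halving
inequality makes `E |A(B/2)|` lose a factor `1/2 - γ` against `E |A(B)|`; together
`r(B/2) ≥ γ E |A(B)| - r(B)/2 > 4 - 1/2`. Since `r(0) = 0`, the intermediate value
theorem on `[0, B/2]` gives the point `N`.
-/

theorem abs_mul_sub_le_add (c x y : ℝ) : |c * (y - x)| ≤ |c * y - x| + |(c - 1) * x| := by
  simpa [show c * (y - x) = (c * y - x) - (c - 1) * x by ring] using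
    abs_sub (c * y - x) ((c - 1) * x)

theorem abs_sub_one_mul_le_add (c x y : ℝ) :
    |(c - 1) * x| ≤ 2 * |c * y - x / 2| + 2 * |c * (y - x / 2)| := by
  have := abs_sub (c * y - x / 2) (c * (y - x / 2))
  rw [show c * y - x / 2 - c * (y - x / 2) = (c - 1) * x / 2 by ring, abs_div, abs_two] at this
  linarith

theorem halving_lower_bound {c γ x y₁ y₂ : ℝ} (hc : 0 ≤ c)
    (hhalf : |y₂ - x / 2| ≤ (1 / 2 - γ) * |y₁ - x|) :
    γ * (c * |y₁ - x|) - |c * y₁ - x| / 2 ≤ |c * y₂ - x / 2| := by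
  have h₁ := abs_mul_sub_le_add c x y₁
  have h₂ := abs_sub_one_mul_le_add c x y₂
  rw [abs_mul c, abs_of_nonneg hc] at h₁ h₂
  linarith [mul_le_mul_of_nonneg_left hhalf hc]

theorem stmt9_general (σ : ℝ → ℝ) (hσcont : Continuous σ) (hσ0 : σ 0 = 0)
    (γ : ℝ) (hγ0 : 0 < γ)
    (B : ℝ) (hB : 0 < B)
    (hhalf : ∀ s ∈ Set.Icc (0 : ℝ) B, |σ (s / 2) - s / 2| ≤ (1 / 2 - γ) * |σ s - s|)
    (a : ℝ) (r : ℝ → ℝ) (hr : ∀ t, r t = |Real.exp a * σ t - t|)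
    (hrB : r B ≤ 1) (hAB : 4 * γ⁻¹ * Real.exp (-a) < |σ B - B|) :
    1 < r (B / 2) ∧ ∃ N ∈ Set.Icc (0 : ℝ) B, r N = 1 := by
  have hgrowth : 4 < γ * (Real.exp a * |σ B - B|) := by
    rw [Real.exp_neg] at hAB
    calc (4 : ℝ) = γ * Real.exp a * (4 * γ⁻¹ * (Real.exp a)⁻¹) := by field_simp
      _ < γ * Real.exp a * |σ B - B| :=
        mul_lt_mul_of_pos_left hAB (mul_pos hγ0 (Real.exp_pos a))
      _ = γ * (Real.exp a * |σ B - B|) := mul_assoc ..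
  have hmid : 1 < r (B / 2) := by
    have key := halving_lower_bound (Real.exp_pos a).le (hhalf B ⟨hB.le, le_rfl⟩)
    rw [← hr, ← hr] at key
    linarith
  have hr_cont : Continuous r := by
    rw [funext hr]
    fun_prop
  have hr0 : r 0 = 0 := by simp [hr, hσ0]
  obtain ⟨N, hN, hrN⟩ := intermediate_value_Icc (by positivity : (0 : ℝ) ≤ B / 2)
    hr_cont.continuousOn ⟨hr0.le.trans zero_le_one, hmid.le⟩
  exact ⟨hmid, N, Set.Icc_subset_Icc le_rfl (half_le_self hB.le) hN, hrN⟩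

/-- Divergence step for variable-curvature horocycle flows: if `σ` is
continuous with `σ 0 = 0`, satisfies the halving inequality on `[0, B]`,
`r t := |e^a σ t - t|` satisfies `r B ≤ 1`, and `|σ B - B| > 4 γ⁻¹ e^{-a}`,
then `r (B/2) > 1`, and there exists `N ∈ [0, B]` with `r N = 1`. -/
theorem stmt9 (σ : ℝ → ℝ) (hσcont : Continuous σ) (hσ0 : σ 0 = 0)
    (γ : ℝ) (hγ0 : 0 < γ) (hγ : γ < 1 / 2)
    (B : ℝ) (hB : 0 < B)
    (hhalf : ∀ s ∈ Set.Icc (0 : ℝ) B, |σ (s / 2) - s / 2| ≤ (1 / 2 - γ) * |σ s - s|)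
    (a : ℝ) (r : ℝ → ℝ) (hr : ∀ t, r t = |Real.exp a * σ t - t|)
    (hrB : r B ≤ 1) (hAB : 4 * γ⁻¹ * Real.exp (-a) < |σ B - B|) :
    1 < r (B / 2) ∧ ∃ N ∈ Set.Icc (0 : ℝ) B, r N = 1 :=
  stmt9_general σ hσcont hσ0 γ hγ0 B hB hhalf a r hr hrB hAB
end
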